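/- arXiv:2312.13755 — 2 statements merged into one kernel-verified Lean document; each statement's English description precedes it below -/
import Mathlib

section
/- Let A be an abelian category and 𝒞 ⊆ A a full additive subcategory such that mod 𝒞 is abelian and 𝒞 generates A. Then every F ∈ mod A admits a morphism F' → F such that F' belongs to mod 𝒞 (viewed inside mod A via the inclusion-induced functor) and such that the image of F' → F under the exact quotient functor mod A → A (the left adjoint of the Yoneda embedding) is an isomorphism. -/
open CategoryTheory Limits

universe v u w

namespace CoherentFunctors

variable (𝒞 : Type u) [Category.{v} 𝒞] [Preadditive 𝒞]

/-- The ambient category of `AddCommGrp`-valued presheaves on `𝒞`. -/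
abbrev Amb := 𝒞ᵒᵖ ⥤ AddCommGrpCat.{v}

variable {𝒞}

/-- A presheaf `F : 𝒞ᵒᵖ ⥤ Ab` is finitely presented (coherent) if it admits a presentation
`Hom(-,X) ⟶ Hom(-,Y) ⟶ F ⟶ 0`, i.e. it is a cokernel of a map between representables. -/
def IsFP (F : Amb 𝒞) : Prop :=
  ∃ (X Y : 𝒞) (f : X ⟶ Y),
    Nonempty (cokernel (preadditiveYoneda.map f) ≅ F)

variable (𝒞)

/-- The category `mod 𝒞` of finitely presented (coherent) functors `𝒞ᵒᵖ ⥤ Ab`. -/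
abbrev ModC := ObjectProperty.FullSubcategory (IsFP (𝒞 := 𝒞))

/-- The Yoneda functor `𝒞 ⥤ mod 𝒞`, `X ↦ Hom(-,X)`. -/
noncomputable def yonedaFP : 𝒞 ⥤ ModC 𝒞 :=
  ObjectProperty.lift _ preadditiveYoneda (fun X =>
    ⟨X, X, 0, ⟨by
      refine (cokernelIsoOfEq ?_).trans cokernelZeroIsoTarget
      simp⟩⟩)

/-- The canonical forgetful (inclusion) functor `mod 𝒞 ⥤ (𝒞ᵒᵖ ⥤ Ab)`. -/
abbrev modIncl : ModC 𝒞 ⥤ Amb 𝒞 := ObjectProperty.ι _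

variable {𝒞}

/-- `f : X ⟶ Y` is a weak kernel of `g : Y ⟶ Z` if the sequence
`Hom(C,X) → Hom(C,Y) → Hom(C,Z)` is exact for every `C`. -/
def IsWeakKernel {X Y Z : 𝒞} (f : X ⟶ Y) (g : Y ⟶ Z) : Prop :=
  f ≫ g = 0 ∧ ∀ ⦃T : 𝒞⦄ (h : T ⟶ Y), h ≫ g = 0 → ∃ k : T ⟶ X, k ≫ f = h

variable (𝒞)

/-- Every morphism of `𝒞` admits a weak kernel. -/
def HasWeakKernels : Prop :=
  ∀ ⦃Y Z : 𝒞⦄ (g : Y ⟶ Z), ∃ (X : 𝒞) (f : X ⟶ Y), IsWeakKernel f g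

/-- The statement that `mod 𝒞` is an abelian category
(with respect to its canonical preadditive structure). -/
def ModCIsAbelian : Prop :=
  ∃ a : Abelian (ModC 𝒞), a.toPreadditive = Preadditive.fullSubcategory _

/-- A functor preserves cokernels. -/
def PreservesCokernels {D : Type*} [Category D] {E : Type*} [Category E]
    [Limits.HasZeroMorphisms D] (T : D ⥤ E) : Prop :=
  ∀ ⦃X Y : D⦄ (f : X ⟶ Y), PreservesColimit (parallelPair f 0) T

end CoherentFunctors

namespace CoherentFunctors

open ZeroObject

variable {A : Type u} [Category.{v} A] [Abelian A] (P : A → Prop)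

/-- The full subcategory of `A` determined by the predicate `P`. -/
abbrev Sub := ObjectProperty.FullSubcategory P

/-- The inclusion functor of the full subcategory determined by `P`. -/
abbrev subIncl : Sub P ⥤ A := ObjectProperty.ι P

/-- The full subcategory determined by `P` generates `A` if every object of `A`
admits an epimorphism from an object satisfying `P`. -/
def Generates : Prop := ∀ X : A, ∃ (C : A), P C ∧ ∃ p : C ⟶ X, Epi p

/-- A functor on the subcategory `𝒞 = P` belongs to `eff(A,𝒞) = mod 𝒞 ∩ eff A` iff it admits
a presentation by a morphism of `𝒞` which is an epimorphism in `A`. -/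
def IsEffRel (F : Amb (Sub P)) : Prop :=
  ∃ (X Y : Sub P) (f : X ⟶ Y), Epi ((subIncl P).map f) ∧
    Nonempty (cokernel (preadditiveYoneda.map f) ≅ F)

/-- The class of morphisms of `mod 𝒞` whose kernel and cokernel lie in `eff(A,𝒞)`;
inverting them realizes the Serre quotient `(mod 𝒞)/(eff(A,𝒞))`. -/
noncomputable def effRelW : MorphismProperty (ModC (Sub P)) :=
  fun _ _ φ => IsEffRel P (kernel ((modIncl (Sub P)).map φ)) ∧
    IsEffRel P (cokernel ((modIncl (Sub P)).map φ))

/-- The subcategory determined by `P` is contravariantly finite in `A`: every object of `A`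
admits a right `P`-approximation. -/
def ContravariantlyFinite : Prop :=
  ∀ X : A, ∃ (C : A) (_ : P C) (π : C ⟶ X),
    ∀ (C' : A) (_ : P C') (g : C' ⟶ X), ∃ h : C' ⟶ C, h ≫ π = g

end CoherentFunctors

open CoherentFunctors ZeroObject

namespace CoherentFunctors

variable {A : Type u} [Category.{v} A] [Abelian A] (P : A → Prop)

/-- A presheaf on `A` lies in (the essential image of) `mod 𝒞 ⊆ mod A` iff it admits a
presentation by a morphism between objects of the subcategory `𝒞` determined by `P`. -/
def IsInModSub (F : Amb A) : Prop :=
  ∃ (X Y : Sub P) (f : X ⟶ Y),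
    Nonempty (cokernel (preadditiveYoneda.map ((subIncl P).map f)) ≅ F)

end CoherentFunctors

/-!
Present `F` as `coker Hom(-, f)` with `f : X ⟶ Y`. Cover `Y` by an epimorphism `q : Q ⟶ Y` and the
pullback of `f` along `q` by an epimorphism `e : P₁ ⟶ X ×_Y Q`, both with source in `𝒞`. Then
`g = e ≫ snd : P₁ ⟶ Q` presents `F' ∈ mod 𝒞`, and since `q` is epi and the square is a pullback up
to the epi `e`, the induced map `coker g ⟶ coker f` is an isomorphism in `A`. Maps
`coker Hom(-, u) ⟶ Hom(-, T)` are the same as maps `coker u ⟶ T`, naturally in `u`, so `F' ⟶ F` is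
inverted by every `Hom(-, Hom(-, T))`; by adjunction it is inverted by `L`.
-/

namespace CategoryTheory

open Function

lemma Adjunction.isIso_map_of_bijective_comp {C D : Type*} [Category C] [Category D]
    {L : C ⥤ D} {R : D ⥤ C} (adj : L ⊣ R) {F' F : C} (φ : F' ⟶ F)
    (hφ : ∀ T : D, Bijective (fun t : F ⟶ R.obj T => φ ≫ t)) : IsIso (L.map φ) := by
  refine isIso_of_coyoneda_map_bijective _ fun T => ?_
  convert (adj.homEquiv F' T).symm.bijective.comp ((hφ T).comp (adj.homEquiv F T).bijective)
    using 1
  funext t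
  simp [adj.homEquiv_naturality_left_symm]

lemma Functor.FullyFaithful.bijective_comp_iff {C D : Type*} [Category C] [Category D]
    {G : C ⥤ D} (hG : G.FullyFaithful) {X' X : C} (φ : X' ⟶ X) (Y : C) :
    Bijective (fun t : X ⟶ Y => φ ≫ t) ↔
      Bijective (fun t : G.obj X ⟶ G.obj Y => G.map φ ≫ t) := by
  have hcomm : (fun t : G.obj X ⟶ G.obj Y => G.map φ ≫ t) ∘ G.map =
      G.map ∘ (fun t : X ⟶ Y => φ ≫ t) := by
    funext t
    simp
  rw [← Bijective.of_comp_iff _ (hG.map_bijective X Y), hcomm,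
    Bijective.of_comp_iff' (hG.map_bijective X' Y)]

section CokernelComparison

open Limits

variable {C D : Type*} [Category C] [Category D] [HasZeroMorphisms C] [HasZeroMorphisms D]
  {G : C ⥤ D} [G.PreservesZeroMorphisms]

lemma Functor.FullyFaithful.bijective_cokernelComparison_comp (hG : G.FullyFaithful)
    {X Y : C} (u : X ⟶ Y) [HasCokernel u] [HasCokernel (G.map u)] (T : C) :
    Bijective (fun s : cokernel u ⟶ T => cokernelComparison u G ≫ G.map s) := by
  refine ⟨fun s s' h => ?_, fun t => ?_⟩
  · rw [← cancel_epi (cokernel.π u)]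
    apply hG.map_injective
    simpa using cokernel.π (G.map u) ≫= h
  · obtain ⟨t₀, ht₀⟩ := hG.map_surjective (cokernel.π (G.map u) ≫ t)
    have hu : u ≫ t₀ = 0 := hG.map_injective (by simp [ht₀])
    refine ⟨cokernel.desc u t₀ hu, ?_⟩
    ext
    simp [ht₀]

lemma Functor.FullyFaithful.bijective_cokernelMap_comp (hG : G.FullyFaithful)
    {X Y X' Y' : C} (u : X ⟶ Y) (v : X' ⟶ Y') (p : X ⟶ X') (r : Y ⟶ Y') (w : u ≫ r = p ≫ v)
    [HasCokernel u] [HasCokernel v] [HasCokernel (G.map u)] [HasCokernel (G.map v)]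
    [IsIso (cokernel.map u v p r w)] (T : C) :
    Bijective (fun t : cokernel (G.map v) ⟶ G.obj T =>
      cokernel.map (G.map u) (G.map v) (G.map p) (G.map r)
        (by rw [← G.map_comp, w, G.map_comp]) ≫ t) := by
  rw [← Bijective.of_comp_iff _ (hG.bijective_cokernelComparison_comp v T)]
  convert (hG.bijective_cokernelComparison_comp u T).comp
    ((isIso_iff_coyoneda_map_bijective (cokernel.map u v p r w)).1 inferInstance T) using 1
  funext s
  rw [Function.comp_apply, Function.comp_apply, cokernel_map_comp_cokernelComparison_assoc,
    G.map_comp]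

end CokernelComparison

namespace Abelian

open Limits

variable {A : Type*} [Category A] [Abelian A]

lemma isIso_cokernelMap_of_isPullback {P X₁ X₂ X₃ X₄ : A} {t : X₁ ⟶ X₂} {l : X₁ ⟶ X₃}
    {r : X₂ ⟶ X₄} {b : X₃ ⟶ X₄} (sq : IsPullback t l r b) [Epi r] (e : P ⟶ X₁) [Epi e] :
    IsIso (cokernel.map (e ≫ t) b (e ≫ l) r (by simp [sq.w])) := by
  have hfac : cokernel.map (e ≫ t) b (e ≫ l) r (by simp [sq.w]) =
      cokernel.map (e ≫ t) t e (𝟙 _) (by simp) ≫ cokernel.map t b l r sq.w := by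
    ext
    simp
  have : Mono (cokernel.map t b l r sq.w) := mono_cokernel_map_of_isPullback sq
  have : Epi (cokernel.map t b l r sq.w) :=
    epi_of_epi_fac (cokernel.π_desc t (r ≫ cokernel.π b) _)
  have : IsIso (cokernel.map t b l r sq.w) := isIso_of_mono_of_epi _
  rw [hfac]
  infer_instance

end Abelian

end CategoryTheory

namespace CoherentFunctors

open Limits

variable {𝒞 : Type u} [Category.{v} 𝒞] [Preadditive 𝒞]

noncomputable def ModC.cokernelYoneda {X Y : 𝒞} (u : X ⟶ Y) : ModC 𝒞 :=
  ⟨cokernel (preadditiveYoneda.map u), X, Y, u, ⟨Iso.refl _⟩⟩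

noncomputable def ModC.cokernelYonedaMap {X Y X' Y' : 𝒞} {u : X ⟶ Y} {v : X' ⟶ Y'}
    (p : X ⟶ X') (r : Y ⟶ Y') (w : u ≫ r = p ≫ v) :
    ModC.cokernelYoneda u ⟶ ModC.cokernelYoneda v :=
  ObjectProperty.homMk (cokernel.map (preadditiveYoneda.map u) (preadditiveYoneda.map v)
    (preadditiveYoneda.map p) (preadditiveYoneda.map r)
    (by rw [← Functor.map_comp, w, Functor.map_comp]))

lemma isIso_map_cokernelYonedaMap {L : ModC 𝒞 ⥤ 𝒞} (adj : L ⊣ yonedaFP 𝒞)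
    {X Y X' Y' : 𝒞} {u : X ⟶ Y} {v : X' ⟶ Y'} (p : X ⟶ X') (r : Y ⟶ Y') (w : u ≫ r = p ≫ v)
    [HasCokernel u] [HasCokernel v] [IsIso (cokernel.map u v p r w)] :
    IsIso (L.map (ModC.cokernelYonedaMap p r w)) :=
  adj.isIso_map_of_bijective_comp _ fun T =>
    ((ObjectProperty.fullyFaithfulι _).bijective_comp_iff _ _).2 <|
      (Functor.FullyFaithful.ofFullyFaithful preadditiveYoneda).bijective_cokernelMap_comp
        u v p r w T

end CoherentFunctors

theorem statement8_general (A : Type u) [Category.{v} A] [Abelian A] (P : A → Prop)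
    (hgen : Generates P)
    (L : ModC A ⥤ A) (adj : L ⊣ yonedaFP A) :
    ∀ F : ModC A, ∃ (F' : ModC A) (φ : F' ⟶ F),
      IsInModSub P F'.obj ∧ IsIso (L.map φ) := by
  intro F
  obtain ⟨X, Y, f, ⟨ι⟩⟩ := F.2
  obtain ⟨Q, hQ, q, _⟩ := hgen Y
  obtain ⟨P₁, hP₁, e, _⟩ := hgen (pullback f q)
  have sq := (IsPullback.of_hasPullback f q).flip
  have w : (e ≫ pullback.snd f q) ≫ q = (e ≫ pullback.fst f q) ≫ f := by simp [sq.w]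
  have : IsIso (cokernel.map _ _ _ _ w) := Abelian.isIso_cokernelMap_of_isPullback sq e
  have := isIso_map_cokernelYonedaMap adj _ _ w
  let ι' : ModC.cokernelYoneda f ≅ F := ObjectProperty.isoMk _ ι
  refine ⟨_, ModC.cokernelYonedaMap _ _ w ≫ ι'.hom,
    ⟨⟨P₁, hP₁⟩, ⟨Q, hQ⟩, ObjectProperty.homMk (e ≫ pullback.snd f q), ⟨Iso.refl _⟩⟩, ?_⟩
  rw [L.map_comp]
  infer_instance

/-- Let `A` be an abelian category and `𝒞 ⊆ A` a full additive subcategory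
such that `mod 𝒞` is abelian and `𝒞` generates `A`. Then every `F ∈ mod A` admits a morphism
`F' ⟶ F` with `F' ∈ mod 𝒞` whose image under the exact left adjoint `mod A ⥤ A` of the Yoneda
embedding is an isomorphism. -/
theorem statement8 (A : Type u) [Category.{v} A] [Abelian A] (P : A → Prop)
    (hP0 : P 0) (hPadd : ∀ X Y : A, P X → P Y → P (X ⊞ Y))
    (habel : ModCIsAbelian (Sub P)) (hgen : Generates P)
    (L : ModC A ⥤ A) (adj : L ⊣ yonedaFP A) :
    ∀ F : ModC A, ∃ (F' : ModC A) (φ : F' ⟶ F),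
      IsInModSub P F'.obj ∧ IsIso (L.map φ) :=
  statement8_general A P hgen L adj
end

section
/- Let A be an abelian category and 𝒞 ⊆ A a full additive subcategory. The right exact functor mod 𝒞 → A extending the inclusion 𝒞 → A admits a right adjoint if and only if 𝒞 is contravariantly finite in A; in that case the right adjoint is given by X ↦ Hom(−,X)|_𝒞, and 𝒞 is contravariantly finite if and only if Hom(−,X)|_𝒞 belongs to mod 𝒞 for every X ∈ A. -/
open CategoryTheory Limits

universe v u w

open CoherentFunctors ZeroObject

namespace CoherentFunctors

variable {A : Type u} [Category.{v} A] [Abelian A] (P : A → Prop)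

/-- The functor `A ⥤ (𝒞ᵒᵖ ⥤ Ab)`, `X ↦ Hom(-,X)|_𝒞`, restricting the Yoneda presheaf of `X`
to the full subcategory `𝒞` determined by `P`. -/
noncomputable def restrictedYoneda : A ⥤ Amb (Sub P) :=
  preadditiveYoneda ⋙ (Functor.whiskeringLeft (Sub P)ᵒᵖ Aᵒᵖ AddCommGrpCat.{v}).obj (subIncl P).op

end CoherentFunctors

/-!
A finitely presented `M` is the cokernel of some `Hom(-,f) : Hom(-,X) ⟶ Hom(-,Y)`, with
`Hom(-,Y) ⟶ M` pointwise surjective. So a cokernel-preserving `L` extending the inclusion is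
additive, and is determined on `mod 𝒞` by its values on representables.

A right approximation `π : C ⟶ X` is the same as a pointwise surjection
`Hom(-,C) ⟶ Hom(-,X)|_𝒞`. Approximating `X` and then `ker π` presents `Hom(-,X)|_𝒞`; conversely
a presentation of `Hom(-,X)|_𝒞`, or of `R X` for a right adjoint `R` of `L`, yields an
approximation of `X`.

Given approximations, `m ∈ M(C) ↦ L(m) : C ⟶ L M` defines a map
`Hom(L M, X) ⟶ Hom(M, Hom(-,X)|_𝒞)` natural in `M`. By Yoneda it is bijective when `M` is
representable, and since both sides turn the presenting cokernel of `M` into a kernel, it is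
bijective for every `M`. Uniqueness of adjoints identifies every right adjoint with this one.
-/

namespace CoherentFunctors

open Opposite

section Preadditive

variable {𝒞 : Type u} [Category.{v} 𝒞] [Preadditive 𝒞]

@[simp]
lemma preadditiveYoneda_obj_map_apply {C : 𝒞} {c c' : 𝒞ᵒᵖ} (u : c ⟶ c') (n : c.unop ⟶ C) :
    (preadditiveYoneda.obj C).map u n = u.unop ≫ n := rfl

lemma preadditiveYoneda_hom_app {F : Amb 𝒞} {C C' : 𝒞} (t : preadditiveYoneda.obj C ⟶ F)
    (n : C' ⟶ C) : t.app (op C') n = F.map n.op (t.app (op C) (𝟙 C)) := by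
  simpa using NatTrans.naturality_apply t n.op (𝟙 C)

lemma preadditiveYoneda_hom_ext {F : Amb 𝒞} {C : 𝒞} {t t' : preadditiveYoneda.obj C ⟶ F}
    (h : t.app (op C) (𝟙 C) = t'.app (op C) (𝟙 C)) : t = t' := by
  ext ⟨C'⟩ n
  rw [preadditiveYoneda_hom_app t n, preadditiveYoneda_hom_app t' n, h]

def preadditiveYonedaEquiv (F : Amb 𝒞) [F.Additive] (C : 𝒞) :
    (preadditiveYoneda.obj C ⟶ F) ≃+ F.obj (op C) where
  toFun t := t.app (op C) (𝟙 C)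
  invFun m :=
    { app := fun C' => AddCommGrpCat.ofHom
        { toFun := fun (n : C'.unop ⟶ C) => F.map n.op m
          map_zero' := by
            change F.map (0 : C'.unop ⟶ C).op m = 0
            rw [op_zero, F.map_zero]
            rfl
          map_add' := fun n n' => congrArg (fun g => g m) (F.map_add (f := n.op) (g := n'.op)) }
      naturality := fun C₁ C₂ u => by
        ext (n : C₁.unop ⟶ C)
        exact F.map_comp_apply n.op u m }
  left_inv t := preadditiveYoneda_hom_ext <| by
    change F.map (𝟙 C).op _ = _
    simp
  right_inv m := by
    change F.map (𝟙 C).op m = m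
    simp
  map_add' _ _ := rfl

instance : (yonedaFP 𝒞).Additive where
  map_add := by
    intro C C' n n'
    ext ⟨C''⟩ a
    exact Preadditive.comp_add _ _ _ _ _ _

structure Presentation (M : ModC 𝒞) where
  {X : 𝒞}
  {Y : 𝒞}
  f : X ⟶ Y
  p : (yonedaFP 𝒞).obj Y ⟶ M
  w : (yonedaFP 𝒞).map f ≫ p = 0
  isColimit : IsColimit (CokernelCofork.ofπ p w)
  surjective_app : ∀ c : 𝒞ᵒᵖ, Function.Surjective (p.hom.app c)

lemma Presentation.nonempty (M : ModC 𝒞) : Nonempty (Presentation M) := by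
  obtain ⟨X, Y, f, ⟨σ⟩⟩ := M.property
  let p : (yonedaFP 𝒞).obj Y ⟶ M :=
    ObjectProperty.homMk (cokernel.π (preadditiveYoneda.map f) ≫ σ.hom)
  have w : (yonedaFP 𝒞).map f ≫ p = 0 := by
    ext1
    change preadditiveYoneda.map f ≫ cokernel.π _ ≫ σ.hom = 0
    simp
  have hσ : IsColimit (CokernelCofork.ofπ p.hom (congrArg (·.hom) w)) :=
    IsColimit.ofIsoColimit (cokernelIsCokernel _) (Cofork.ext σ rfl)
  refine ⟨⟨f, p, w, ?_, fun c => ?_⟩⟩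
  · exact isColimitOfReflects (modIncl 𝒞)
      ((CokernelCofork.isColimitMapCoconeEquiv _ (modIncl 𝒞)).symm hσ)
  · rw [← AddCommGrpCat.epi_iff_surjective]
    exact inferInstanceAs (Epi ((cokernel.π (preadditiveYoneda.map f)).app c ≫ σ.hom.app c))

lemma Presentation.exists_comp_eq {M : ModC 𝒞} (pr : Presentation M) {C : 𝒞}
    (t : (yonedaFP 𝒞).obj C ⟶ M) : ∃ n : C ⟶ pr.Y, (yonedaFP 𝒞).map n ≫ pr.p = t := by
  obtain ⟨n, hn⟩ := pr.surjective_app (op C) (t.hom.app (op C) (𝟙 C))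
  change C ⟶ pr.Y at n
  refine ⟨n, ?_⟩
  ext1
  apply preadditiveYoneda_hom_ext
  exact (congrArg (pr.p.hom.app (op C)) (Category.id_comp n)).trans hn

instance (M : ModC 𝒞) : M.obj.Additive where
  map_add {c c' a b} := by
    obtain ⟨pr⟩ := Presentation.nonempty M
    ext m
    obtain ⟨n, rfl⟩ := pr.surjective_app c m
    have h (u : c ⟶ c') := NatTrans.naturality_apply pr.p.hom u n
    rw [AddCommGrpCat.hom_add_apply, ← h, ← h, ← h, ← map_add]
    exact congrArg _ (Preadditive.add_comp _ _ _ _ _ _)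

noncomputable def yonedaFPEquiv (M : ModC 𝒞) (C : 𝒞) :
    ((yonedaFP 𝒞).obj C ⟶ M) ≃+ M.obj.obj (op C) where
  toFun t := preadditiveYonedaEquiv M.obj C t.hom
  invFun m := ObjectProperty.homMk ((preadditiveYonedaEquiv M.obj C).symm m)
  left_inv t := by
    ext1
    exact (preadditiveYonedaEquiv M.obj C).symm_apply_apply t.hom
  right_inv m := (preadditiveYonedaEquiv M.obj C).apply_symm_apply m
  map_add' _ _ := rfl

lemma yonedaFPEquiv_yonedaFP_map_comp {M : ModC 𝒞} {C C' : 𝒞} (n : C' ⟶ C) (t : (yonedaFP 𝒞).obj C ⟶ M) :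
    yonedaFPEquiv M C' ((yonedaFP 𝒞).map n ≫ t) = M.obj.map n.op (yonedaFPEquiv M C t) :=
  (congrArg (t.hom.app (op C')) (Category.id_comp n)).trans (preadditiveYoneda_hom_app t.hom n)

lemma yonedaFPEquiv_comp {M N : ModC 𝒞} {C : 𝒞} (t : (yonedaFP 𝒞).obj C ⟶ M) (u : M ⟶ N) :
    yonedaFPEquiv N C (t ≫ u) = u.hom.app (op C) (yonedaFPEquiv M C t) := rfl

section Extension

variable {A : Type*} [Category* A] {L : ModC 𝒞 ⥤ A}

lemma map_yonedaFP_map {i : 𝒞 ⥤ A} (e : yonedaFP 𝒞 ⋙ L ≅ i) {C C' : 𝒞} (n : C ⟶ C') :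
    L.map ((yonedaFP 𝒞).map n) = e.hom.app C ≫ i.map n ≫ e.inv.app C' :=
  (NatIso.naturality_2 e n).symm

lemma Presentation.epi_map (hL : PreservesCokernels L) {M : ModC 𝒞} (pr : Presentation M) :
    Epi (L.map pr.p) := by
  have := hL ((yonedaFP 𝒞).map pr.f)
  have hc := isColimitOfPreserves L pr.isColimit
  refine ⟨fun g h hgh => hc.hom_ext ?_⟩
  rintro (_ | _)
  · simp only [Functor.mapCocone_ι_app, Cofork.app_zero_eq_comp_π_left, Cofork.π_ofπ,
      L.map_comp, Category.assoc, hgh]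
  · exact hgh

theorem additive_of_preservesCokernels [Preadditive A] {i : 𝒞 ⥤ A} [i.Additive]
    (hL : PreservesCokernels L) (e : yonedaFP 𝒞 ⋙ L ≅ i) : L.Additive := by
  have map_add_yonedaFP {C C' : 𝒞} (n n' : C ⟶ C') : L.map ((yonedaFP 𝒞).map (n + n')) =
      L.map ((yonedaFP 𝒞).map n) + L.map ((yonedaFP 𝒞).map n') := by
    simp only [map_yonedaFP_map e, i.map_add, Preadditive.add_comp, Preadditive.comp_add]
  have map_add_of_representable {C : 𝒞} {M : ModC 𝒞} (t t' : (yonedaFP 𝒞).obj C ⟶ M) :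
      L.map (t + t') = L.map t + L.map t' := by
    obtain ⟨pr⟩ := Presentation.nonempty M
    obtain ⟨n, rfl⟩ := pr.exists_comp_eq t
    obtain ⟨n', rfl⟩ := pr.exists_comp_eq t'
    rw [← Preadditive.add_comp, ← Functor.map_add, L.map_comp, map_add_yonedaFP,
      Preadditive.add_comp, L.map_comp, L.map_comp]
  refine ⟨fun {M N a b} => ?_⟩
  obtain ⟨pr⟩ := Presentation.nonempty M
  have := pr.epi_map hL
  rw [← cancel_epi (L.map pr.p), ← L.map_comp, Preadditive.comp_add, map_add_of_representable,
    Preadditive.comp_add, L.map_comp, L.map_comp]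

theorem bijective_of_forall_bijective_yonedaFP [HasZeroMorphisms A] [L.PreservesZeroMorphisms]
    (hL : PreservesCokernels L) {X : A} {N : ModC 𝒞} (ψ : ∀ M : ModC 𝒞, (L.obj M ⟶ X) → (M ⟶ N))
    (hψ : ∀ {M M' : ModC 𝒞} (u : M' ⟶ M) (φ : L.obj M ⟶ X), ψ M' (L.map u ≫ φ) = u ≫ ψ M φ)
    (hrep : ∀ C : 𝒞, Function.Bijective (ψ ((yonedaFP 𝒞).obj C))) (M : ModC 𝒞) :
    Function.Bijective (ψ M) := by
  obtain ⟨pr⟩ := Presentation.nonempty M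
  have := pr.epi_map hL
  refine ⟨fun φ φ' h => ?_, fun τ => ?_⟩
  · rw [← cancel_epi (L.map pr.p)]
    apply (hrep pr.Y).injective
    rw [hψ, hψ, h]
  · obtain ⟨g, hg⟩ := (hrep pr.Y).surjective (pr.p ≫ τ)
    have hψ_zero : ψ ((yonedaFP 𝒞).obj pr.X) 0 = 0 := by
      simpa using hψ (0 : (yonedaFP 𝒞).obj pr.X ⟶ (yonedaFP 𝒞).obj pr.X) 0
    have hg_zero : L.map ((yonedaFP 𝒞).map pr.f) ≫ g = 0 := by
      apply (hrep pr.X).injective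
      rw [hψ, hg, hψ_zero, reassoc_of% pr.w, zero_comp]
    have := hL ((yonedaFP 𝒞).map pr.f)
    have hc := isColimitCoforkMapOfIsColimit' L pr.w pr.isColimit
    refine ⟨hc.desc (CokernelCofork.ofπ g hg_zero), ?_⟩
    have : Epi pr.p := Cofork.IsColimit.epi pr.isColimit
    rw [← cancel_epi pr.p, ← hψ, ← hg]
    exact congrArg _ (hc.fac _ WalkingParallelPair.one)

end Extension

end Preadditive

noncomputable def isColimitCokernelCoforkOfExactOfSurjective {J : Type*} [Category* J]
    {F G H : J ⥤ AddCommGrpCat.{w}} {f : F ⟶ G} {g : G ⟶ H} (w : f ≫ g = 0)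
    (hexact : ∀ j (y : G.obj j), g.app j y = 0 → ∃ x, f.app j x = y)
    (hsurj : ∀ j, Function.Surjective (g.app j)) : IsColimit (CokernelCofork.ofπ g w) := by
  apply evaluationJointlyReflectsColimits
  intro j
  refine (CokernelCofork.isColimitMapCoconeEquiv _ ((evaluation J AddCommGrpCat).obj j)).symm ?_
  let S := ShortComplex.mk (f.app j) (g.app j) (by rw [← NatTrans.comp_app, w]; rfl)
  have hS : S.Exact := by
    rw [ShortComplex.ab_exact_iff]
    exact hexact j
  have : Epi S.g := (AddCommGrpCat.epi_iff_surjective _).2 (hsurj j)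
  exact hS.gIsCokernel

section Approximation

variable {A : Type u} [Category.{v} A] [Abelian A] {P : A → Prop}

instance (X : A) : ((restrictedYoneda P).obj X).Additive where
  map_add := by
    intros
    ext
    exact Preadditive.add_comp _ _ _ _ _ _

theorem isFP_restrictedYoneda (hcf : ContravariantlyFinite P) (X : A) :
    IsFP ((restrictedYoneda P).obj X) := by
  obtain ⟨C, hC, π, hπ⟩ := hcf X
  obtain ⟨D, hD, ρ, hρ⟩ := hcf (kernel π)
  let f : (⟨D, hD⟩ : Sub P) ⟶ ⟨C, hC⟩ := ObjectProperty.homMk (ρ ≫ kernel.ι π)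
  let τ := (preadditiveYonedaEquiv ((restrictedYoneda P).obj X) ⟨C, hC⟩).symm π
  have w : preadditiveYoneda.map f ≫ τ = 0 := by
    ext c g
    change (g.hom ≫ ρ ≫ kernel.ι π) ≫ π = 0
    simp
  refine ⟨_, _, f, ⟨(cokernelIsCokernel _).coconePointUniqueUpToIso
    (isColimitCokernelCoforkOfExactOfSurjective w (fun c g hg => ?_) (fun c g => ?_))⟩⟩
  · obtain ⟨h, hh⟩ := hρ c.unop.obj c.unop.property (kernel.lift π g.hom hg)
    refine ⟨ObjectProperty.homMk h, ?_⟩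
    change ObjectProperty.homMk h ≫ f = g
    ext
    change h ≫ ρ ≫ kernel.ι π = g.hom
    rw [← Category.assoc, hh]
    exact kernel.lift_ι _ _ _
  · obtain ⟨h, hh⟩ := hπ c.unop.obj c.unop.property g
    exact ⟨ObjectProperty.homMk h, hh⟩

end Approximation

section Adjunction

variable {A : Type u} [Category.{v} A] [Abelian A] {P : A → Prop}

lemma exists_rightApproximation_of_surjective {X : A} (M : ModC (Sub P))
    (e : ∀ C : Sub P, ((yonedaFP (Sub P)).obj C ⟶ M) → (C.obj ⟶ X))
    (he : ∀ C, Function.Surjective (e C))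
    (hnat : ∀ {C C' : Sub P} (n : C ⟶ C') (t : (yonedaFP (Sub P)).obj C' ⟶ M),
      e C ((yonedaFP (Sub P)).map n ≫ t) = n.hom ≫ e C' t) :
    ∃ (C : A) (_ : P C) (π : C ⟶ X),
      ∀ (C' : A) (_ : P C') (g : C' ⟶ X), ∃ h : C' ⟶ C, h ≫ π = g := by
  obtain ⟨pr⟩ := Presentation.nonempty M
  refine ⟨pr.Y.obj, pr.Y.property, e _ pr.p, fun C' hC' g => ?_⟩
  obtain ⟨t, rfl⟩ := he ⟨C', hC'⟩ g
  obtain ⟨n, rfl⟩ := pr.exists_comp_eq t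
  exact ⟨n.hom, (hnat n pr.p).symm⟩

theorem contravariantlyFinite_of_isFP_restrictedYoneda
    (h : ∀ X : A, IsFP ((restrictedYoneda P).obj X)) : ContravariantlyFinite P := fun X =>
  exists_rightApproximation_of_surjective ⟨_, h X⟩ (fun C => yonedaFPEquiv _ C)
    (fun C => (yonedaFPEquiv _ C).surjective) (fun n t => yonedaFPEquiv_yonedaFP_map_comp n t)

theorem contravariantlyFinite_of_adjunction {L : ModC (Sub P) ⥤ A}
    (hL : yonedaFP (Sub P) ⋙ L ≅ subIncl P) {R : A ⥤ ModC (Sub P)} (adj : L ⊣ R) :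
    ContravariantlyFinite P := fun X =>
  exists_rightApproximation_of_surjective (R.obj X)
    (fun C t => hL.inv.app C ≫ (adj.homEquiv _ X).symm t)
    (fun C => ((hL.app C).symm.homFromEquiv.trans (adj.homEquiv _ X)).symm.surjective)
    (fun n t => by
      rw [adj.homEquiv_naturality_left_symm, map_yonedaFP_map hL]
      simp)

noncomputable def restrictedYonedaFP (hcf : ContravariantlyFinite P) : A ⥤ ModC (Sub P) :=
  ObjectProperty.lift _ (restrictedYoneda P) (isFP_restrictedYoneda hcf)

variable {L : ModC (Sub P) ⥤ A} [L.Additive] (hL : yonedaFP (Sub P) ⋙ L ≅ subIncl P)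
  (hcf : ContravariantlyFinite P)

/-- The unit of the adjunction: `m ∈ M(C)` goes to `L` of the morphism `Hom(-,C) ⟶ M` that
classifies `m`. -/
noncomputable def toRestrictedYonedaFP (M : ModC (Sub P)) :
    M ⟶ (restrictedYonedaFP hcf).obj (L.obj M) :=
  ObjectProperty.homMk
    { app := fun c => AddCommGrpCat.ofHom ((Preadditive.leftComp _ (hL.inv.app c.unop)).comp
        (L.mapAddHom.comp (yonedaFPEquiv M c.unop).symm.toAddMonoidHom))
      naturality := fun c c' u => by
        ext m
        have h : (yonedaFPEquiv M c'.unop).symm (M.obj.map u m) =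
            (yonedaFP (Sub P)).map u.unop ≫ (yonedaFPEquiv M c.unop).symm m := by
          rw [AddEquiv.symm_apply_eq, yonedaFPEquiv_yonedaFP_map_comp, AddEquiv.apply_symm_apply]
          rfl
        change hL.inv.app c'.unop ≫ L.map ((yonedaFPEquiv M c'.unop).symm (M.obj.map u m)) =
          u.unop.hom ≫ hL.inv.app c.unop ≫ L.map ((yonedaFPEquiv M c.unop).symm m)
        rw [h, L.map_comp, map_yonedaFP_map hL]
        simp }

lemma toRestrictedYonedaFP_comp_map {M M' : ModC (Sub P)} (u : M' ⟶ M) {X : A}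
    (φ : L.obj M ⟶ X) :
    toRestrictedYonedaFP hL hcf M' ≫ (restrictedYonedaFP hcf).map (L.map u ≫ φ) =
      u ≫ toRestrictedYonedaFP hL hcf M ≫ (restrictedYonedaFP hcf).map φ := by
  ext c m
  change (hL.inv.app c.unop ≫ L.map ((yonedaFPEquiv M' c.unop).symm m)) ≫ L.map u ≫ φ =
    (hL.inv.app c.unop ≫ L.map ((yonedaFPEquiv M c.unop).symm (u.hom.app c m))) ≫ φ
  have h : (yonedaFPEquiv M c.unop).symm (u.hom.app c m) =
      (yonedaFPEquiv M' c.unop).symm m ≫ u := by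
    rw [AddEquiv.symm_apply_eq, yonedaFPEquiv_comp, AddEquiv.apply_symm_apply]
  simp only [h, L.map_comp, Category.assoc]

lemma yonedaFPEquiv_toRestrictedYonedaFP_comp_map {C : Sub P} {X : A}
    (g : L.obj ((yonedaFP (Sub P)).obj C) ⟶ X) :
    yonedaFPEquiv _ C (toRestrictedYonedaFP hL hcf _ ≫ (restrictedYonedaFP hcf).map g) =
      hL.inv.app C ≫ g := by
  change (hL.inv.app C ≫ L.map ((yonedaFPEquiv _ C).symm (yonedaFPEquiv _ C (𝟙 _)))) ≫ g = _
  rw [AddEquiv.symm_apply_apply, L.map_id]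
  simp

theorem bijective_toRestrictedYonedaFP_comp_map (hL₁ : PreservesCokernels L) (M : ModC (Sub P))
    (X : A) : Function.Bijective
      (fun φ : L.obj M ⟶ X => toRestrictedYonedaFP hL hcf M ≫ (restrictedYonedaFP hcf).map φ) :=
  bijective_of_forall_bijective_yonedaFP hL₁
    (fun M φ => toRestrictedYonedaFP hL hcf M ≫ (restrictedYonedaFP hcf).map φ)
    (fun u φ => toRestrictedYonedaFP_comp_map hL hcf u φ)
    (fun C => by
      have h : yonedaFPEquiv _ C ∘ (fun g => toRestrictedYonedaFP hL hcf _ ≫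
          (restrictedYonedaFP hcf).map g) = (hL.app C).homFromEquiv (Z := X) :=
        funext (yonedaFPEquiv_toRestrictedYonedaFP_comp_map hL hcf)
      exact ((yonedaFPEquiv _ C).bijective.of_comp_iff' _).1 (h ▸ Equiv.bijective _)) M

noncomputable def adjunctionRestrictedYonedaFP (hL₁ : PreservesCokernels L) :
    L ⊣ restrictedYonedaFP hcf :=
  Adjunction.mkOfHomEquiv
    { homEquiv := fun M X =>
        .ofBijective _ (bijective_toRestrictedYonedaFP_comp_map hL hcf hL₁ M X)
      homEquiv_naturality_left_symm := fun {_ M X} u g => by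
        rw [Equiv.symm_apply_eq, Equiv.ofBijective_apply, toRestrictedYonedaFP_comp_map]
        exact congrArg (u ≫ ·) (Equiv.ofBijective_apply_symm_apply _
          (bijective_toRestrictedYonedaFP_comp_map hL hcf hL₁ M X) g).symm
      homEquiv_naturality_right := fun φ g => by
        simp only [Equiv.ofBijective_apply, Functor.map_comp, Category.assoc] }

end Adjunction

end CoherentFunctors

theorem statement10_general (A : Type u) [Category.{v} A] [Abelian A] (P : A → Prop)
    (L : ModC (Sub P) ⥤ A) (hL₁ : PreservesCokernels L)
    (hL₂ : yonedaFP (Sub P) ⋙ L ≅ subIncl P) :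
    ((∃ Radj : A ⥤ ModC (Sub P), Nonempty (L ⊣ Radj)) ↔ ContravariantlyFinite P) ∧
    (ContravariantlyFinite P →
      ∀ Radj : A ⥤ ModC (Sub P), Nonempty (L ⊣ Radj) →
        Nonempty (Radj ⋙ modIncl (Sub P) ≅ restrictedYoneda P)) ∧
    (ContravariantlyFinite P ↔ ∀ X : A, IsFP ((restrictedYoneda P).obj X)) := by
  have : L.Additive := additive_of_preservesCokernels hL₁ hL₂
  refine ⟨⟨fun ⟨_, ⟨adj⟩⟩ => contravariantlyFinite_of_adjunction hL₂ adj,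
      fun hcf => ⟨_, ⟨adjunctionRestrictedYonedaFP hL₂ hcf hL₁⟩⟩⟩,
    fun hcf _ ⟨adj⟩ => ⟨?_⟩,
    ⟨isFP_restrictedYoneda, contravariantlyFinite_of_isFP_restrictedYoneda⟩⟩
  exact Functor.isoWhiskerRight (adj.rightAdjointUniq (adjunctionRestrictedYonedaFP hL₂ hcf hL₁))
    (modIncl (Sub P)) ≪≫ ObjectProperty.liftCompιIso _ _ _

/-- **Statement 10.** Let `A` be an abelian category and `𝒞 ⊆ A` a full additive subcategory.
The right exact functor `mod 𝒞 ⥤ A` extending the inclusion admits a right adjoint iff `𝒞` is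
contravariantly finite in `A`; in that case the right adjoint is given by `X ↦ Hom(-,X)|_𝒞`,
and `𝒞` is contravariantly finite iff `Hom(-,X)|_𝒞 ∈ mod 𝒞` for every `X ∈ A`. -/
theorem statement10 (A : Type u) [Category.{v} A] [Abelian A] (P : A → Prop)
    (hP0 : P 0) (hPadd : ∀ X Y : A, P X → P Y → P (X ⊞ Y))
    (L : ModC (Sub P) ⥤ A) (hL₁ : PreservesCokernels L)
    (hL₂ : yonedaFP (Sub P) ⋙ L ≅ subIncl P) :
    ((∃ Radj : A ⥤ ModC (Sub P), Nonempty (L ⊣ Radj)) ↔ ContravariantlyFinite P) ∧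
    (ContravariantlyFinite P →
      ∀ Radj : A ⥤ ModC (Sub P), Nonempty (L ⊣ Radj) →
        Nonempty (Radj ⋙ modIncl (Sub P) ≅ restrictedYoneda P)) ∧
    (ContravariantlyFinite P ↔ ∀ X : A, IsFP ((restrictedYoneda P).obj X)) :=
  statement10_general A P L hL₁ hL₂
end
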